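/- Fix $\sigma_w^2 \geq 0$ and $\tau > \sigma_w^2$, $r_{bw}^{\alpha}, \lambda_{bw} > 0$. The function $P_b^{\max} \mapsto e^{\gamma} - \gamma \mathrm{Ei}(\gamma)$ with $\gamma = \frac{(\sigma_w^2 - \tau) r_{bw}^{\alpha}}{\lambda_{bw} P_b^{\max}} < 0$ is strictly increasing in $P_b^{\max} \in (0, \infty)$, tends to $0$ as $P_b^{\max} \to 0^+$, and tends to $1$ as $P_b^{\max} \to \infty$. -/

import Mathlib

/-! Write `γ = c / P` with `c = (σ_w² - τ) r_bw / λ_bw < 0`; then `P ↦ γ` increases from `-∞`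
to `0⁻` on `(0, ∞)`. The function `g γ = e^γ - γ Ei γ` has derivative `-Ei γ > 0`. For `t ≤ γ < 0`
one has `0 ≤ γ e^t / t ≤ e^t`, so `|γ Ei γ| ≤ e^γ`, which gives `g → 0` at `-∞`; the same bound
dominates the integrand of `γ Ei γ`, which tends to `0` pointwise as `γ → 0⁻`, so `g → 1` there. -/

open Real Set Filter

noncomputable def Ei (x : ℝ) : ℝ := ∫ t in Set.Iic x, Real.exp t / t

open MeasureTheory
open scoped Topology

lemma abs_mul_exp_div_le_exp {x t : ℝ} (htx : t ≤ x) (hx : x < 0) :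
    |x * (exp t / t)| ≤ exp t := by
  have ht : t < 0 := htx.trans_lt hx
  rw [abs_mul, abs_div, abs_of_neg hx, abs_of_pos (exp_pos t), abs_of_neg ht, mul_div_left_comm]
  exact mul_le_of_le_one_right (exp_pos t).le ((div_le_one (neg_pos.2 ht)).2 (by linarith))

lemma integrableOn_exp_div_self_Iic {x : ℝ} (hx : x < 0) :
    IntegrableOn (fun t => exp t / t) (Iic x) := by
  refine ((integrableOn_exp_Iic x).div_const (-x)).mono'
    (measurable_exp.div measurable_id).aestronglyMeasurable ?_
  filter_upwards [ae_restrict_mem measurableSet_Iic] with t (ht : t ≤ x)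
  have h := abs_mul_exp_div_le_exp ht hx
  rw [abs_mul, abs_of_neg hx] at h
  rw [norm_eq_abs, le_div_iff₀ (neg_pos.2 hx), mul_comm]
  exact h

lemma Ei_neg {x : ℝ} (hx : x < 0) : Ei x < 0 := by
  have hpos : 0 < ∫ t in Iic x, -(exp t / t) := by
    have hneg : ∀ t ∈ Iic x, exp t / t < 0 := fun t ht =>
      div_neg_of_pos_of_neg (exp_pos t) ((show t ≤ x from ht).trans_lt hx)
    rw [setIntegral_pos_iff_support_of_nonneg_ae (f := fun t => -(exp t / t)) _
      (integrableOn_exp_div_self_Iic hx).neg]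
    · refine lt_of_lt_of_le (by simp [volume_Iic])
        (measure_mono (s := Iic x) fun t ht => ⟨?_, ht⟩)
      exact neg_ne_zero.2 (hneg t ht).ne
    · filter_upwards [ae_restrict_mem measurableSet_Iic] with t ht
      exact neg_nonneg.2 (hneg t ht).le
  rw [integral_neg] at hpos
  exact neg_pos.1 hpos

lemma Ei_eq_add_intervalIntegral {a b : ℝ} (ha : a < 0) (hb : b < 0) :
    Ei b = Ei a + ∫ t in a..b, exp t / t := by
  rw [← intervalIntegral.integral_Iic_sub_Iic (integrableOn_exp_div_self_Iic ha)
    (integrableOn_exp_div_self_Iic hb), Ei, Ei, add_sub_cancel]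

lemma hasDerivAt_Ei {x : ℝ} (hx : x < 0) : HasDerivAt Ei (exp x / x) x := by
  have hint : IntervalIntegrable (fun t => exp t / t) volume (x - 1) x :=
    (intervalIntegrable_iff_integrableOn_Ioc_of_le (by linarith)).2
      ((integrableOn_exp_div_self_Iic hx).mono_set Ioc_subset_Iic_self)
  have hderiv := (intervalIntegral.integral_hasDerivAt_right hint
    (by fun_prop : Measurable fun t => exp t / t).stronglyMeasurable.stronglyMeasurableAtFilter
    (by fun_prop (disch := exact hx.ne))).const_add (Ei (x - 1))
  refine hderiv.congr_of_eventuallyEq ?_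
  filter_upwards [Iio_mem_nhds hx] with y hy
  exact Ei_eq_add_intervalIntegral (by linarith) hy

lemma abs_mul_Ei_le_exp {x : ℝ} (hx : x < 0) : |x * Ei x| ≤ exp x := by
  rw [Ei, ← integral_const_mul, ← integral_exp_Iic x, ← norm_eq_abs]
  refine norm_integral_le_of_norm_le (integrableOn_exp_Iic x) ?_
  filter_upwards [ae_restrict_mem measurableSet_Iic] with t ht
  exact abs_mul_exp_div_le_exp ht hx

lemma tendsto_mul_Ei_atBot : Tendsto (fun x => x * Ei x) atBot (𝓝 0) := by
  refine squeeze_zero_norm' ?_ tendsto_exp_atBot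
  filter_upwards [Iio_mem_atBot 0] with x hx
  exact abs_mul_Ei_le_exp hx

lemma tendsto_mul_Ei_nhdsLT_zero : Tendsto (fun x => x * Ei x) (𝓝[<] 0) (𝓝 0) := by
  set F : ℝ → ℝ → ℝ := fun x => (Iic x).indicator fun t => x * (exp t / t)
  have hEi : ∀ x, x * Ei x = ∫ t, F x t := fun x => by
    rw [integral_indicator measurableSet_Iic, Ei, integral_const_mul]
  have hmeas : ∀ x, AEStronglyMeasurable (F x) volume := fun x =>
    ((measurable_const.mul (measurable_exp.div measurable_id)).indicator
      measurableSet_Iic).aestronglyMeasurable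
  have hbound : ∀ x < 0, ∀ t, ‖F x t‖ ≤ (Iic 0).indicator exp t := fun x hx t => by
    dsimp only [F]
    by_cases htx : t ≤ x
    · rw [indicator_of_mem (mem_Iic.2 htx), indicator_of_mem (mem_Iic.2 (htx.trans hx.le))]
      exact abs_mul_exp_div_le_exp htx hx
    · rw [indicator_of_notMem (notMem_Iic.2 (not_le.1 htx)), norm_zero]
      exact indicator_nonneg (fun t _ => (exp_pos t).le) t
  have hlim : ∀ t, Tendsto (fun x => F x t) (𝓝[<] 0) (𝓝 0) := fun t => by
    dsimp only [F]
    rcases lt_or_ge t 0 with ht | ht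
    · have hlin : Tendsto (fun x => x * (exp t / t)) (𝓝[<] 0) (𝓝 0) := by
        simpa using (tendsto_id.mul_const (exp t / t)).mono_left (nhdsWithin_le_nhds (a := 0))
      refine hlin.congr' ?_
      filter_upwards [Ioo_mem_nhdsLT ht] with x hx
      rw [indicator_of_mem (mem_Iic.2 hx.1.le)]
    · refine tendsto_const_nhds.congr' ?_
      filter_upwards [self_mem_nhdsWithin] with x (hx : x < 0)
      rw [indicator_of_notMem (notMem_Iic.2 (hx.trans_le ht))]
  simp_rw [hEi]
  simpa using tendsto_integral_filter_of_dominated_convergence (l := 𝓝[<] (0 : ℝ)) _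
    (.of_forall hmeas)
    (eventually_nhdsWithin_of_forall fun x hx => .of_forall (hbound x hx))
    ((integrable_indicator_iff measurableSet_Iic).2 (integrableOn_exp_Iic 0)) (.of_forall hlim)

noncomputable def falseAlarmProb (γ : ℝ) : ℝ := exp γ - γ * Ei γ

lemma hasDerivAt_falseAlarmProb {γ : ℝ} (hγ : γ < 0) :
    HasDerivAt falseAlarmProb (-Ei γ) γ := by
  have h := (hasDerivAt_exp γ).sub ((hasDerivAt_id γ).mul (hasDerivAt_Ei hγ))
  rwa [id_eq, one_mul, mul_div_cancel₀ _ hγ.ne, sub_add_cancel_right] at h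

lemma strictMonoOn_falseAlarmProb : StrictMonoOn falseAlarmProb (Iio 0) := by
  refine strictMonoOn_of_deriv_pos (convex_Iio 0)
    (fun γ hγ => (hasDerivAt_falseAlarmProb hγ).continuousAt.continuousWithinAt) fun γ hγ => ?_
  rw [interior_Iio] at hγ
  rw [(hasDerivAt_falseAlarmProb hγ).deriv, neg_pos]
  exact Ei_neg hγ

lemma tendsto_falseAlarmProb_atBot : Tendsto falseAlarmProb atBot (𝓝 0) := by
  unfold falseAlarmProb
  simpa using tendsto_exp_atBot.sub tendsto_mul_Ei_atBot

lemma tendsto_falseAlarmProb_nhdsLT_zero : Tendsto falseAlarmProb (𝓝[<] 0) (𝓝 1) := by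
  unfold falseAlarmProb
  simpa using ((continuous_exp.tendsto 0).mono_left nhdsWithin_le_nhds).sub
    tendsto_mul_Ei_nhdsLT_zero

lemma strictMonoOn_const_div_of_neg {c : ℝ} (hc : c < 0) : StrictMonoOn (c / ·) (Ioi 0) := by
  intro a ha b _ hab
  simpa only [div_eq_mul_inv] using mul_lt_mul_of_neg_left (inv_strictAnti₀ ha hab) hc

lemma tendsto_const_div_nhdsGT_zero_atBot {c : ℝ} (hc : c < 0) :
    Tendsto (c / ·) (𝓝[>] 0) atBot := by
  simpa only [div_eq_mul_inv] using tendsto_inv_nhdsGT_zero.const_mul_atTop_of_neg hc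

lemma tendsto_const_div_atTop_nhdsLT_zero {c : ℝ} (hc : c < 0) :
    Tendsto (c / ·) atTop (𝓝[<] 0) := by
  refine tendsto_nhdsWithin_of_tendsto_nhds_of_eventually_within _
    (tendsto_const_nhds.div_atTop tendsto_id) ?_
  filter_upwards [eventually_gt_atTop 0] with x hx
  exact div_neg_of_neg_of_pos hc hx

theorem stmt6_general (rbw lbw sw2 τ : ℝ) (hrbw : 0 < rbw) (hlbw : 0 < lbw)
    (hτ : sw2 < τ) :
    StrictMonoOn
      (fun P : ℝ => Real.exp ((sw2 - τ) * rbw / (lbw * P)) -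
        ((sw2 - τ) * rbw / (lbw * P)) * Ei ((sw2 - τ) * rbw / (lbw * P))) (Set.Ioi 0) ∧
    Filter.Tendsto
      (fun P : ℝ => Real.exp ((sw2 - τ) * rbw / (lbw * P)) -
        ((sw2 - τ) * rbw / (lbw * P)) * Ei ((sw2 - τ) * rbw / (lbw * P)))
      (nhdsWithin 0 (Set.Ioi 0)) (nhds 0) ∧
    Filter.Tendsto
      (fun P : ℝ => Real.exp ((sw2 - τ) * rbw / (lbw * P)) -
        ((sw2 - τ) * rbw / (lbw * P)) * Ei ((sw2 - τ) * rbw / (lbw * P)))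
      Filter.atTop (nhds 1) := by
  set c := (sw2 - τ) * rbw / lbw
  have hc : c < 0 := div_neg_of_neg_of_pos (mul_neg_of_neg_of_pos (sub_neg.2 hτ) hrbw) hlbw
  have hγ : (fun P : ℝ => (sw2 - τ) * rbw / (lbw * P)) = (c / ·) := by
    ext P
    rw [div_mul_eq_div_div]
  change StrictMonoOn (falseAlarmProb ∘ _) _ ∧ Tendsto (falseAlarmProb ∘ _) _ _ ∧
    Tendsto (falseAlarmProb ∘ _) _ _
  rw [hγ]
  exact ⟨strictMonoOn_falseAlarmProb.comp (strictMonoOn_const_div_of_neg hc)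
      fun P hP => div_neg_of_neg_of_pos hc hP,
    tendsto_falseAlarmProb_atBot.comp (tendsto_const_div_nhdsGT_zero_atBot hc),
    tendsto_falseAlarmProb_nhdsLT_zero.comp (tendsto_const_div_atTop_nhdsLT_zero hc)⟩

/-- The false alarm probability `e^γ - γ Ei(γ)` with
`γ = (sw2 - τ) rbw / (lbw Pbmax) < 0` is strictly increasing in `Pbmax ∈ (0,∞)`,
tends to `0` as `Pbmax → 0⁺`, and tends to `1` as `Pbmax → ∞`. -/
theorem stmt6 (rbw lbw sw2 τ : ℝ) (hrbw : 0 < rbw) (hlbw : 0 < lbw)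
    (hsw2 : 0 ≤ sw2) (hτ : sw2 < τ) :
    StrictMonoOn
      (fun P : ℝ => Real.exp ((sw2 - τ) * rbw / (lbw * P)) -
        ((sw2 - τ) * rbw / (lbw * P)) * Ei ((sw2 - τ) * rbw / (lbw * P))) (Set.Ioi 0) ∧
    Filter.Tendsto
      (fun P : ℝ => Real.exp ((sw2 - τ) * rbw / (lbw * P)) -
        ((sw2 - τ) * rbw / (lbw * P)) * Ei ((sw2 - τ) * rbw / (lbw * P)))
      (nhdsWithin 0 (Set.Ioi 0)) (nhds 0) ∧
    Filter.Tendsto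
      (fun P : ℝ => Real.exp ((sw2 - τ) * rbw / (lbw * P)) -
        ((sw2 - τ) * rbw / (lbw * P)) * Ei ((sw2 - τ) * rbw / (lbw * P)))
      Filter.atTop (nhds 1) :=
  stmt6_general rbw lbw sw2 τ hrbw hlbw hτ
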